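/- arXiv:1011.6123 — 11 statements merged into one kernel-verified Lean document; each statement's English description precedes it below -/
import Mathlib

section
/- Let R be a commutative ring and A an R-module, and let δ : A →ₗ[R] A ⊗[R] A and μ : (A ⊗[R] A) →ₗ[R] A be linear maps satisfying (M): μ ∘ δ = id, (F): δ ∘ μ = (TensorProduct.map μ id) ∘ α⁻¹ ∘ (TensorProduct.map id δ), and (F'): δ ∘ μ = (TensorProduct.map id μ) ∘ α ∘ (TensorProduct.map δ id), where α : (A ⊗ A) ⊗ A ≃ₗ A ⊗ (A ⊗ A) is the associator. Then δ is coassociative, i.e. axiom (A) holds: (TensorProduct.map id δ) ∘ δ = α ∘ (TensorProduct.map δ id) ∘ δ. (This is the linear-map instance of the paper's lemma that in any dagger monoidal category, (M), (F) and (F') imply (A).) -/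
open scoped TensorProduct

open TensorProduct LinearMap

section Aux

variable {R A : Type*} [CommRing R] [AddCommGroup A] [Module R A]

/-- Naturality of the associator in the last slot. -/
lemma frob_aux_N1 (f : A →ₗ[R] A ⊗[R] A) (z : (A ⊗[R] A) ⊗[R] A) :
    (map LinearMap.id (map LinearMap.id f)) ((TensorProduct.assoc R A A A) z) =
      (TensorProduct.assoc R A A (A ⊗[R] A)) ((map LinearMap.id f) z) := by
  induction z using TensorProduct.induction_on with
  | zero => simp
  | tmul x c =>
      induction x using TensorProduct.induction_on with
      | zero => simp
      | tmul a b => simp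
      | add u v hu hv => simp [add_tmul, hu, hv]
  | add u v hu hv => simp [hu, hv]

/-- Interchange law: (1⊗f)∘(g⊗1) = (g⊗1)∘(1⊗f). -/
lemma frob_aux_N2 (f g : A →ₗ[R] A ⊗[R] A) (z : A ⊗[R] A) :
    (map (LinearMap.id : A ⊗[R] A →ₗ[R] A ⊗[R] A) f) ((map g LinearMap.id) z) =
      (map g (LinearMap.id : A ⊗[R] A →ₗ[R] A ⊗[R] A)) ((map LinearMap.id f) z) := by
  induction z using TensorProduct.induction_on with
  | zero => simp
  | tmul a b => simp
  | add u v hu hv => simp [hu, hv]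

lemma frob_aux_helper (g : A ⊗[R] A →ₗ[R] A) (w : A ⊗[R] A) (b c : A) :
    (map LinearMap.id (map g LinearMap.id))
        ((map LinearMap.id (TensorProduct.assoc R A A A).symm.toLinearMap)
          ((TensorProduct.assoc R A A (A ⊗[R] A)) (w ⊗ₜ[R] (b ⊗ₜ[R] c)))) =
      (TensorProduct.assoc R A A A)
        (((map LinearMap.id g) ((TensorProduct.assoc R A A A) (w ⊗ₜ[R] b))) ⊗ₜ[R] c) := by
  induction w using TensorProduct.induction_on with
  | zero => simp
  | tmul x y => simp
  | add u v hu hv => simp [add_tmul, hu, hv]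

/-- The pentagon-type rearrangement used in the main proof. -/
lemma frob_aux_N3 (f : A →ₗ[R] A ⊗[R] A) (g : A ⊗[R] A →ₗ[R] A) (z : A ⊗[R] (A ⊗[R] A)) :
    (map LinearMap.id (map g LinearMap.id))
        ((map LinearMap.id (TensorProduct.assoc R A A A).symm.toLinearMap)
          ((TensorProduct.assoc R A A (A ⊗[R] A))
            ((map f (LinearMap.id : A ⊗[R] A →ₗ[R] A ⊗[R] A)) z))) =
      (TensorProduct.assoc R A A A)
        ((map ((map LinearMap.id g) ∘ₗ (TensorProduct.assoc R A A A).toLinearMap ∘ₗ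
            (map f LinearMap.id)) LinearMap.id)
          ((TensorProduct.assoc R A A A).symm z)) := by
  induction z using TensorProduct.induction_on with
  | zero => simp
  | tmul a x =>
      induction x using TensorProduct.induction_on with
      | zero => simp
      | tmul b c => simpa using frob_aux_helper g (f a) b c
      | add u v hu hv => simp only [tmul_add, map_add, hu, hv]
  | add u v hu hv => simp [hu, hv]

end Aux

/-- In the linear-map instance, axioms (M), (F) and (F') imply coassociativity (A). -/
theorem frobenius_M_F_F'_imply_A {R A : Type*} [CommRing R] [AddCommGroup A] [Module R A]
    (δ : A →ₗ[R] A ⊗[R] A) (μ : A ⊗[R] A →ₗ[R] A)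
    (hM : μ ∘ₗ δ = LinearMap.id)
    (hF : δ ∘ₗ μ =
      (TensorProduct.map μ LinearMap.id) ∘ₗ
        (TensorProduct.assoc R A A A).symm.toLinearMap ∘ₗ
          (TensorProduct.map LinearMap.id δ))
    (hF' : δ ∘ₗ μ =
      (TensorProduct.map LinearMap.id μ) ∘ₗ
        (TensorProduct.assoc R A A A).toLinearMap ∘ₗ
          (TensorProduct.map δ LinearMap.id)) :
    (TensorProduct.map LinearMap.id δ) ∘ₗ δ =
      (TensorProduct.assoc R A A A).toLinearMap ∘ₗ (TensorProduct.map δ LinearMap.id) ∘ₗ δ := by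
  -- pointwise versions of the axioms
  have hM' : ∀ a : A, μ (δ a) = a := fun a => by
    have := congrFun (congrArg DFunLike.coe hM) a
    simpa using this
  have hFp : ∀ z : A ⊗[R] A, δ (μ z) =
      (map μ LinearMap.id) ((TensorProduct.assoc R A A A).symm ((map LinearMap.id δ) z)) :=
    fun z => by
      have := congrFun (congrArg DFunLike.coe hF) z
      simpa using this
  have hF'p : ∀ z : A ⊗[R] A, δ (μ z) =
      (map LinearMap.id μ) ((TensorProduct.assoc R A A A) ((map δ LinearMap.id) z)) :=
    fun z => by
      have := congrFun (congrArg DFunLike.coe hF') z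
      simpa using this
  -- δ = (1⊗μ)∘α∘(δ⊗1)∘δ
  have h1 : ∀ a : A, δ a =
      (map LinearMap.id μ) ((TensorProduct.assoc R A A A) ((map δ LinearMap.id) (δ a))) :=
    fun a => by rw [← hF'p, hM']
  -- pointwise interchange for map id
  have hmapid : ∀ (y : A ⊗[R] (A ⊗[R] A)),
      (map (LinearMap.id : A →ₗ[R] A) δ) ((map LinearMap.id μ) y) =
        (map LinearMap.id (map μ LinearMap.id))
          ((map LinearMap.id (TensorProduct.assoc R A A A).symm.toLinearMap)
            ((map LinearMap.id (map LinearMap.id δ)) y)) := by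
    intro y
    induction y using TensorProduct.induction_on with
    | zero => simp
    | tmul a x => simp [hFp]
    | add u v hu hv => simp only [map_add, hu, hv]
  ext a
  simp only [LinearMap.comp_apply, LinearEquiv.coe_coe]
  calc (map LinearMap.id δ) (δ a)
      = (map LinearMap.id δ) ((map LinearMap.id μ)
          ((TensorProduct.assoc R A A A) ((map δ LinearMap.id) (δ a)))) := by rw [← h1]
    _ = (map LinearMap.id (map μ LinearMap.id))
          ((map LinearMap.id (TensorProduct.assoc R A A A).symm.toLinearMap)
            ((map LinearMap.id (map LinearMap.id δ))
              ((TensorProduct.assoc R A A A) ((map δ LinearMap.id) (δ a))))) := hmapid _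
    _ = (map LinearMap.id (map μ LinearMap.id))
          ((map LinearMap.id (TensorProduct.assoc R A A A).symm.toLinearMap)
            ((TensorProduct.assoc R A A (A ⊗[R] A))
              ((map LinearMap.id δ) ((map δ LinearMap.id) (δ a))))) := by
        rw [frob_aux_N1]
    _ = (map LinearMap.id (map μ LinearMap.id))
          ((map LinearMap.id (TensorProduct.assoc R A A A).symm.toLinearMap)
            ((TensorProduct.assoc R A A (A ⊗[R] A))
              ((map δ LinearMap.id) ((map LinearMap.id δ) (δ a))))) := by
        rw [frob_aux_N2]
    _ = (TensorProduct.assoc R A A A)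
          ((map ((map LinearMap.id μ) ∘ₗ (TensorProduct.assoc R A A A).toLinearMap ∘ₗ
              (map δ LinearMap.id)) LinearMap.id)
            ((TensorProduct.assoc R A A A).symm ((map LinearMap.id δ) (δ a)))) :=
        frob_aux_N3 δ μ _
    _ = (TensorProduct.assoc R A A A)
          ((map (δ ∘ₗ μ) LinearMap.id)
            ((TensorProduct.assoc R A A A).symm ((map LinearMap.id δ) (δ a)))) := by
        rw [← hF']
    _ = (TensorProduct.assoc R A A A) ((map δ LinearMap.id)
          ((map μ LinearMap.id)
            ((TensorProduct.assoc R A A A).symm ((map LinearMap.id δ) (δ a))))) := by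
        rw [show (map (δ ∘ₗ μ) (LinearMap.id : A →ₗ[R] A)) =
              (map δ LinearMap.id) ∘ₗ (map μ LinearMap.id) by
            rw [← TensorProduct.map_comp, LinearMap.id_comp]]
        rfl
    _ = (TensorProduct.assoc R A A A) ((map δ LinearMap.id) (δ (μ (δ a)))) := by rw [← hFp]
    _ = (TensorProduct.assoc R A A A) ((map δ LinearMap.id) (δ a)) := by rw [hM']
end

section
/- Let A be a set with mul : A → A → Option A a Frobenius algebra in Rel, i.e. satisfying (Surj): for every c there exist a, b with mul a b = some c; (C): mul a b = mul b a; (A): (mul a b).bind (fun w => mul w c) = (mul b c).bind (fun v => mul a v); and (F): for all a, b, c, d, (∃ e, mul a b = some e ∧ mul c d = some e) ↔ (∃ b₁, mul b₁ d = some b ∧ mul a b₁ = some c). Then the relation a ~ b, defined by (mul a b).isSome, is reflexive: (mul a a).isSome for every a ∈ A. -/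
/-- For a Frobenius algebra in Rel, the relation `a ~ b := (mul a b).isSome`
is reflexive. -/
theorem rel_frobenius_sim_refl {A : Type*} (mul : A → A → Option A)
    (hSurj : ∀ c : A, ∃ a b : A, mul a b = some c)
    (hC : ∀ a b : A, mul a b = mul b a)
    (hA : ∀ a b c : A,
      (mul a b).bind (fun w => mul w c) = (mul b c).bind (fun v => mul a v))
    (hF : ∀ a b c d : A,
      (∃ e, mul a b = some e ∧ mul c d = some e) ↔
      (∃ b₁, mul b₁ d = some b ∧ mul a b₁ = some c)) :
    ∀ a : A, (mul a a).isSome := by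
  intro a
  obtain ⟨x, y, hxy⟩ := hSurj a
  obtain ⟨b₁, hb₁y, hxb₁⟩ := (hF x y x y).mp ⟨a, hxy, hxy⟩
  have hab₁ : mul a b₁ = some a := by
    have h := hA x y b₁
    rw [hxy, hC y b₁, hb₁y] at h
    simpa [hxy] using h
  obtain ⟨e, he, -⟩ := (hF a a a a).mpr ⟨b₁, by rw [hC]; exact hab₁, hab₁⟩
  rw [he]; rfl
end

section
/- Let A be a set with mul : A → A → Option A a Frobenius algebra in Rel, i.e. satisfying (Surj), (C), (A) and (F) as in the context. Then the relation a ~ b, defined by (mul a b).isSome, is transitive: if (mul a b).isSome and (mul b c).isSome then (mul a c).isSome. -/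
/-! If `a * b` is defined, it equals `b * a` by commutativity, and the Frobenius law applied to
this coincidence produces `x` with `x * a = b`. Then `(x * a) * c = b * c` is defined, so by
associativity `x * (a * c)` is defined, and in particular so is `a * c`. -/

section RelFrobenius

variable {A : Type*} (mul : A → A → Option A)

theorem exists_mul_eq_of_mul_eq_mul_swap
    (hF : ∀ a b c d : A,
      (∃ e, mul a b = some e ∧ mul c d = some e) ↔
      (∃ b₁, mul b₁ d = some b ∧ mul a b₁ = some c))
    {a b e : A} (hab : mul a b = some e) (hba : mul b a = some e) :
    ∃ x, mul x a = some b :=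
  let ⟨x, hxa, _⟩ := (hF a b b a).mp ⟨e, hab, hba⟩
  ⟨x, hxa⟩

theorem isSome_mul_of_isSome_mul_mul
    (hA : ∀ a b c : A,
      (mul a b).bind (fun w => mul w c) = (mul b c).bind (fun v => mul a v))
    {x a b c : A} (hxa : mul x a = some b) (hbc : (mul b c).isSome) :
    (mul a c).isSome := by
  have hassoc := hA x a c
  rw [hxa, Option.bind_some] at hassoc
  rw [hassoc] at hbc
  exact Option.isSome_of_isSome_bind hbc

end RelFrobenius

theorem rel_frobenius_sim_trans_general {A : Type*} (mul : A → A → Option A)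
    (hC : ∀ a b : A, mul a b = mul b a)
    (hA : ∀ a b c : A,
      (mul a b).bind (fun w => mul w c) = (mul b c).bind (fun v => mul a v))
    (hF : ∀ a b c d : A,
      (∃ e, mul a b = some e ∧ mul c d = some e) ↔
      (∃ b₁, mul b₁ d = some b ∧ mul a b₁ = some c)) :
    ∀ a b c : A, (mul a b).isSome → (mul b c).isSome → (mul a c).isSome := by
  intro a b c hab hbc
  obtain ⟨e, he⟩ := Option.isSome_iff_exists.mp hab
  obtain ⟨x, hxa⟩ := exists_mul_eq_of_mul_eq_mul_swap mul hF he ((hC b a).trans he)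
  exact isSome_mul_of_isSome_mul_mul mul hA hxa hbc

/-- For a Frobenius algebra in Rel, the relation `a ~ b := (mul a b).isSome`
is transitive. -/
theorem rel_frobenius_sim_trans {A : Type*} (mul : A → A → Option A)
    (hSurj : ∀ c : A, ∃ a b : A, mul a b = some c)
    (hC : ∀ a b : A, mul a b = mul b a)
    (hA : ∀ a b c : A,
      (mul a b).bind (fun w => mul w c) = (mul b c).bind (fun v => mul a v))
    (hF : ∀ a b c d : A,
      (∃ e, mul a b = some e ∧ mul c d = some e) ↔
      (∃ b₁, mul b₁ d = some b ∧ mul a b₁ = some c)) :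
    ∀ a b c : A, (mul a b).isSome → (mul b c).isSome → (mul a c).isSome :=
  rel_frobenius_sim_trans_general mul hC hA hF
end

section
/- Let A be a set with mul : A → A → Option A a Frobenius algebra in Rel, i.e. satisfying (Surj), (C), (A) and (F) as in the context. Then A is a disjoint union of abelian groups: the relation a ~ b := (mul a b).isSome is an equivalence relation on A, the multiplication is total and internal on each equivalence class (for all b, c with a ~ b and a ~ c there exists d with mul b c = some d and a ~ d), and each equivalence class is an abelian group: for every a there exists e with a ~ e such that mul e b = some b for every b with a ~ b, and for every b with a ~ b there exists b' with a ~ b' and mul b b' = some e. -/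
/-!
Axiom (F) packs three facts. Read from right to left it is a strong associativity: if `a x = p`
and `x d = q` are defined then so are `a q` and `p d`, and they agree. Read from left to right at
`(a, b, a, b)` it produces local units, and at `(b, a, a, b)`, with commutativity, quotients.
Local units and strong associativity show that `a ~ a b`, and then that `~` is transitive: two
local units of a common element `b` are related, so strong associativity carries `a ~ b` over to
`a ~ c` for `b ~ c`. Reflexivity follows from surjectivity and transitivity. On a class, a local
unit of `a` at `a` is a unit by strong associativity, and quotients give inverses.
-/

namespace RelFrobenius

variable {A : Type*} {mul : A → A → Option A}

def FrobeniusLaw (mul : A → A → Option A) : Prop :=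
  ∀ a b c d : A, (∃ e, mul a b = some e ∧ mul c d = some e) ↔
    (∃ b₁, mul b₁ d = some b ∧ mul a b₁ = some c)

namespace FrobeniusLaw

theorem exists_assoc (hF : FrobeniusLaw mul) {a x d p q : A}
    (hax : mul a x = some p) (hxd : mul x d = some q) :
    ∃ e, mul a q = some e ∧ mul p d = some e :=
  (hF a q p d).mpr ⟨x, hxd, hax⟩

theorem exists_unit (hF : FrobeniusLaw mul) {a b c : A} (h : mul a b = some c) :
    ∃ u, mul u b = some b ∧ mul a u = some a :=
  (hF a b a b).mp ⟨c, h, h⟩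

theorem exists_quotient (hF : FrobeniusLaw mul) (hC : ∀ a b : A, mul a b = mul b a)
    {a b c : A} (h : mul a b = some c) : ∃ t, mul t b = some a :=
  ((hF b a a b).mp ⟨c, (hC b a).trans h, h⟩).imp fun _ ht => ht.1

theorem isSome_mul_of_mul_eq (hF : FrobeniusLaw mul) (hC : ∀ a b : A, mul a b = mul b a)
    {a b c : A} (h : mul a b = some c) : (mul a c).isSome := by
  obtain ⟨v, hva, hbv⟩ := hF.exists_unit ((hC b a).trans h)
  obtain ⟨e, hab, hcv⟩ := hF.exists_assoc h hbv
  have hcv : mul c v = some c := hcv.trans (hab.symm.trans h)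
  obtain ⟨e', hac, -⟩ := hF.exists_assoc ((hC a v).trans hva) ((hC v c).trans hcv)
  simp [hac]

theorem isSome_trans (hF : FrobeniusLaw mul) (hC : ∀ a b : A, mul a b = mul b a) {a b c : A}
    (hab : (mul a b).isSome) (hbc : (mul b c).isSome) : (mul a c).isSome := by
  obtain ⟨p, hp⟩ := Option.isSome_iff_exists.mp hab
  obtain ⟨q, hq⟩ := Option.isSome_iff_exists.mp hbc
  obtain ⟨u₁, hu₁b, hau₁⟩ := hF.exists_unit hp
  obtain ⟨u₂, hu₂c, hbu₂⟩ := hF.exists_unit hq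
  -- `u₁` and `u₂` are both units at `b`, so `u₁ t = u₂` for some `t`, whence `u₁ ~ u₂`.
  obtain ⟨t, -, hu₁t⟩ := (hF u₁ b u₂ b).mp ⟨b, hu₁b, (hC u₂ b).trans hbu₂⟩
  obtain ⟨w, hu₁u₂⟩ := Option.isSome_iff_exists.mp (hF.isSome_mul_of_mul_eq hC hu₁t)
  obtain ⟨e, -, hau₂⟩ := hF.exists_assoc hau₁ hu₁u₂
  obtain ⟨e', hac, -⟩ := hF.exists_assoc hau₂ hu₂c
  simp [hac]

theorem isSome_mul_self (hSurj : ∀ c : A, ∃ a b : A, mul a b = some c) (hF : FrobeniusLaw mul)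
    (hC : ∀ a b : A, mul a b = mul b a) (a : A) : (mul a a).isSome := by
  obtain ⟨x, y, hxy⟩ := hSurj a
  have hxa := hF.isSome_mul_of_mul_eq hC hxy
  exact hF.isSome_trans hC (by rwa [hC]) hxa

theorem equivalence_isSome (hSurj : ∀ c : A, ∃ a b : A, mul a b = some c)
    (hF : FrobeniusLaw mul) (hC : ∀ a b : A, mul a b = mul b a) :
    Equivalence (fun a b : A => (mul a b).isSome = true) where
  refl := hF.isSome_mul_self hSurj hC
  symm {a b} h := by rwa [hC]
  trans := hF.isSome_trans hC

theorem exists_mul_eq_of_isSome (hF : FrobeniusLaw mul) (hC : ∀ a b : A, mul a b = mul b a)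
    {a b c : A} (hab : (mul a b).isSome) (hac : (mul a c).isSome) :
    ∃ d, mul b c = some d ∧ (mul a d).isSome := by
  have hbc : (mul b c).isSome := hF.isSome_trans hC (by rwa [hC]) hac
  obtain ⟨d, hd⟩ := Option.isSome_iff_exists.mp hbc
  exact ⟨d, hd, hF.isSome_trans hC hab (hF.isSome_mul_of_mul_eq hC hd)⟩

theorem mul_eq_self_of_mul_eq_self (hF : FrobeniusLaw mul) (hC : ∀ a b : A, mul a b = mul b a)
    {a b u : A} (hua : mul u a = some a) (hab : (mul a b).isSome) : mul u b = some b := by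
  obtain ⟨c, hc⟩ := Option.isSome_iff_exists.mp hab
  obtain ⟨t, hta⟩ := hF.exists_quotient hC ((hC b a).trans hc)
  have hat : mul a t = some b := (hC a t).trans hta
  obtain ⟨e, hub, hat'⟩ := hF.exists_assoc hua hat
  exact hub.trans (hat'.symm.trans hat)

theorem exists_inverse (hF : FrobeniusLaw mul) (hC : ∀ a b : A, mul a b = mul b a)
    {a b u : A} (hub : mul u b = some b) (hab : (mul a b).isSome) :
    ∃ b', (mul a b').isSome ∧ mul b b' = some u := by
  obtain ⟨t, htb⟩ := hF.exists_quotient hC hub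
  have hbt : mul b t = some u := (hC b t).trans htb
  exact ⟨t, hF.isSome_trans hC hab (by simp [hbt]), hbt⟩

end FrobeniusLaw

end RelFrobenius

open RelFrobenius in
theorem rel_frobenius_disjoint_union_of_groups_general {A : Type*} (mul : A → A → Option A)
    (hSurj : ∀ c : A, ∃ a b : A, mul a b = some c)
    (hC : ∀ a b : A, mul a b = mul b a)
    (hF : ∀ a b c d : A,
      (∃ e, mul a b = some e ∧ mul c d = some e) ↔
      (∃ b₁, mul b₁ d = some b ∧ mul a b₁ = some c)) :
    Equivalence (fun a b : A => (mul a b).isSome = true) ∧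
    (∀ a b c : A, (mul a b).isSome → (mul a c).isSome →
      ∃ d : A, mul b c = some d ∧ (mul a d).isSome) ∧
    (∀ a : A, ∃ e : A, (mul a e).isSome ∧
      (∀ b : A, (mul a b).isSome → mul e b = some b) ∧
      (∀ b : A, (mul a b).isSome → ∃ b' : A, (mul a b').isSome ∧ mul b b' = some e)) := by
  have hF : FrobeniusLaw mul := hF
  refine ⟨hF.equivalence_isSome hSurj hC, fun a b c => hF.exists_mul_eq_of_isSome hC, fun a => ?_⟩
  obtain ⟨r, hr⟩ := Option.isSome_iff_exists.mp (hF.isSome_mul_self hSurj hC a)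
  obtain ⟨u, hua, hau⟩ := hF.exists_unit hr
  have hunit : ∀ b, (mul a b).isSome → mul u b = some b := fun b =>
    hF.mul_eq_self_of_mul_eq_self hC hua
  exact ⟨u, by simp [hau], hunit, fun b hb => hF.exists_inverse hC (hunit b hb) hb⟩

/-- A Frobenius algebra in Rel is a disjoint union of abelian groups. -/
theorem rel_frobenius_disjoint_union_of_groups {A : Type*} (mul : A → A → Option A)
    (hSurj : ∀ c : A, ∃ a b : A, mul a b = some c)
    (hC : ∀ a b : A, mul a b = mul b a)
    (hA : ∀ a b c : A,
      (mul a b).bind (fun w => mul w c) = (mul b c).bind (fun v => mul a v))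
    (hF : ∀ a b c d : A,
      (∃ e, mul a b = some e ∧ mul c d = some e) ↔
      (∃ b₁, mul b₁ d = some b ∧ mul a b₁ = some c)) :
    Equivalence (fun a b : A => (mul a b).isSome = true) ∧
    (∀ a b c : A, (mul a b).isSome → (mul a c).isSome →
      ∃ d : A, mul b c = some d ∧ (mul a d).isSome) ∧
    (∀ a : A, ∃ e : A, (mul a e).isSome ∧
      (∀ b : A, (mul a b).isSome → mul e b = some b) ∧
      (∀ b : A, (mul a b).isSome → ∃ b' : A, (mul a b').isSome ∧ mul b b' = some e)) :=
  rel_frobenius_disjoint_union_of_groups_general mul hSurj hC hF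
end

section
/- Let A be a set with mul : A → A → Option A satisfying (Surj): for every c there exist a, b with mul a b = some c; (C): mul a b = mul b a; and (A): (mul a b).bind (fun w => mul w c) = (mul b c).bind (fun v => mul a v). Then axiom (F) — for all a, b, c, d: (∃ e, mul a b = some e ∧ mul c d = some e) ↔ (∃ b₁, mul b₁ d = some b ∧ mul a b₁ = some c) — holds if and only if axiom (H) holds: there exists star : A → A such that for all a, b, c, mul (star a) b = some c ↔ mul a c = some b. (In Rel, Frobenius algebras satisfy (H), and (F) and (H) are equivalent in the presence of the other axioms.) -/
/-!
(H) ⇒ (F): with `star` at hand, both sides of (F) say `b = star a · (c · d)`, computed in two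
different ways, so they are equivalent by associativity.

(F) ⇒ (H): the instance `(F) a b a b` shows that whenever `a · b` is defined there is a `u` with
`a · u = a` and `u · b = b`; together with (Surj) every `a` has a right unit, and (F) also forces
it to be unique, call it `u a`. The instance `(F) a (u a) (u a) a` yields an inverse `star a`
with `a · star a = u a`, and then `star a · b = c ↔ a · c = b` is associativity around `u a`.
-/

section PartialMagma

variable {A : Type*}

def PartialAssoc (mul : A → A → Option A) : Prop :=
  ∀ a b c : A, (mul a b).bind (fun w => mul w c) = (mul b c).bind (fun v => mul a v)

def FrobeniusLaw (mul : A → A → Option A) : Prop :=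
  ∀ a b c d : A,
    (∃ e, mul a b = some e ∧ mul c d = some e) ↔ (∃ b₁, mul b₁ d = some b ∧ mul a b₁ = some c)

def IsStar (mul : A → A → Option A) (star : A → A) : Prop :=
  ∀ a b c : A, mul (star a) b = some c ↔ mul a c = some b

variable {mul : A → A → Option A} {a b c u v w x : A}

namespace PartialAssoc

variable (hA : PartialAssoc mul)
include hA

theorem mul_eq_mul (hab : mul a b = some w) (hbc : mul b c = some v) : mul w c = mul a v := by
  simpa only [hab, hbc, Option.bind_some] using hA a b c

theorem exists_of_mul_left (hab : mul a b = some w) (hwc : mul w c = some x) :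
    ∃ v, mul b c = some v ∧ mul a v = some x := by
  have h := hA a b c
  rw [hab, Option.bind_some, hwc, eq_comm] at h
  exact Option.bind_eq_some_iff.mp h

theorem exists_of_mul_right (hbc : mul b c = some v) (hav : mul a v = some x) :
    ∃ w, mul a b = some w ∧ mul w c = some x := by
  have h := hA a b c
  rw [hbc, Option.bind_some, hav] at h
  exact Option.bind_eq_some_iff.mp h

end PartialAssoc

theorem frobeniusLaw_of_isStar {star : A → A} (hA : PartialAssoc mul) (hstar : IsStar mul star) :
    FrobeniusLaw mul := by
  intro a b c d
  constructor
  · rintro ⟨e, hab, hcd⟩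
    obtain ⟨b₁, hac, hb₁d⟩ := hA.exists_of_mul_right hcd ((hstar a e b).mpr hab)
    exact ⟨b₁, hb₁d, (hstar a c b₁).mp hac⟩
  · rintro ⟨b₁, hb₁d, hab₁⟩
    obtain ⟨e, hcd, hae⟩ := hA.exists_of_mul_left ((hstar a c b₁).mpr hab₁) hb₁d
    exact ⟨e, (hstar a e b).mp hae, hcd⟩

namespace FrobeniusLaw

variable (hF : FrobeniusLaw mul)
include hF

theorem exists_unit_of_mul (hab : mul a b = some c) :
    ∃ u, mul u b = some b ∧ mul a u = some a :=
  (hF a b a b).mp ⟨c, hab, hab⟩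

theorem exists_mul_eq_of_mul (hC : ∀ a b : A, mul a b = mul b a) (hab : mul a b = some c) :
    ∃ t, mul t a = some b ∧ mul a t = some b :=
  (hF a b b a).mp ⟨c, hab, by rwa [hC]⟩

variable (hC : ∀ a b : A, mul a b = mul b a) (hA : PartialAssoc mul)
include hC hA

theorem right_unit_unique (hu : mul a u = some a) (hv : mul a v = some a) : u = v := by
  obtain ⟨t, hta, -⟩ := hF.exists_mul_eq_of_mul hC hu
  obtain ⟨t', ht'a, -⟩ := hF.exists_mul_eq_of_mul hC hv
  have huv : mul u v = some u := (hA.mul_eq_mul hta hv).trans hta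
  have hvu : mul v u = some v := (hA.mul_eq_mul ht'a hu).trans ht'a
  exact Option.some_injective _ (huv.symm.trans ((hC u v).trans hvu))

theorem right_unit_mul (hu : mul a u = some a) (hab : mul a b = some c) : mul u b = some b := by
  obtain ⟨u', hu'b, hau'⟩ := hF.exists_unit_of_mul hab
  rwa [hF.right_unit_unique hC hA hu hau']

theorem exists_right_unit (hSurj : ∀ c : A, ∃ a b : A, mul a b = some c) (a : A) :
    ∃ u, mul a u = some a := by
  obtain ⟨x, y, hxy⟩ := hSurj a
  obtain ⟨u, huy, -⟩ := hF.exists_unit_of_mul hxy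
  exact ⟨u, (hA.mul_eq_mul hxy (by rwa [hC])).trans hxy⟩

theorem exists_isStar (hSurj : ∀ c : A, ∃ a b : A, mul a b = some c) :
    ∃ star : A → A, IsStar mul star := by
  choose u hu using hF.exists_right_unit hC hA hSurj
  choose star hstar_mul hmul_star using fun a => hF.exists_mul_eq_of_mul hC (hu a)
  refine ⟨star, fun a b c => ⟨fun h => ?_, fun h => ?_⟩⟩
  · have hunit : u (star a) = u a := by
      refine hF.right_unit_unique hC hA ?_ (hu a)
      rw [hC]
      exact hF.right_unit_mul hC hA (hu (star a)) (hstar_mul a)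
    have hub : mul (u a) b = some b := hunit ▸ hF.right_unit_mul hC hA (hu (star a)) h
    exact (hA.mul_eq_mul (hmul_star a) h).symm.trans hub
  · have huc : mul (u a) c = some c := hF.right_unit_mul hC hA (hu a) h
    exact (hA.mul_eq_mul (hstar_mul a) h).symm.trans huc

end FrobeniusLaw

end PartialMagma

/-- In Rel, in the presence of (Surj)=(M), (C) and (A), the Frobenius law (F)
is equivalent to the H*-algebra axiom (H). -/
theorem rel_F_iff_H {A : Type*} (mul : A → A → Option A)
    (hSurj : ∀ c : A, ∃ a b : A, mul a b = some c)
    (hC : ∀ a b : A, mul a b = mul b a)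
    (hA : ∀ a b c : A,
      (mul a b).bind (fun w => mul w c) = (mul b c).bind (fun v => mul a v)) :
    (∀ a b c d : A,
      (∃ e, mul a b = some e ∧ mul c d = some e) ↔
      (∃ b₁, mul b₁ d = some b ∧ mul a b₁ = some c)) ↔
    (∃ star : A → A, ∀ a b c : A, mul (star a) b = some c ↔ mul a c = some b) :=
  ⟨fun hF => FrobeniusLaw.exists_isStar hF hC hA hSurj,
    fun ⟨_, hstar⟩ => frobeniusLaw_of_isStar hA hstar⟩
end

section
/- Let A be a set and δ : A → A × A an injective function (in the category PInj of sets and partial injections, axiom (M), δ† ∘ δ = id, forces the comultiplication δ to be a total injective function) satisfying (C): Prod.swap ∘ δ = δ, and (A) (coassociativity, after reassociating the triple product): for all a, (δ a).1 = (δ ((δ a).1)).1, (δ ((δ a).2)).1 = (δ ((δ a).1)).2, and (δ ((δ a).2)).2 = (δ a).2. Then δ is the diagonal: δ a = (a, a) for all a ∈ A. (Consequently every object of PInj carries a unique H*-algebra structure, namely the diagonal.) -/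
/-- In PInj, axioms (M), (C) and (A) force the comultiplication to be the
diagonal, so every object carries a unique H*-algebra structure. -/
theorem pinj_hstar_unique {A : Type*} (δ : A → A × A)
    (hinj : Function.Injective δ)
    (hC : Prod.swap ∘ δ = δ)
    (hA : ∀ a : A,
      (δ a).1 = (δ ((δ a).1)).1 ∧
      (δ ((δ a).2)).1 = (δ ((δ a).1)).2 ∧
      (δ ((δ a).2)).2 = (δ a).2) :
    ∀ a : A, δ a = (a, a) := by
  have hsym : ∀ a : A, (δ a).2 = (δ a).1 := fun a => by
    have := congrFun hC a
    exact congrArg Prod.fst this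
  intro a
  set x := (δ a).1 with hx
  have h1 : x = (δ x).1 := (hA a).1
  have hδx : δ x = (x, x) := by
    have := hsym x
    rw [Prod.ext_iff]
    exact ⟨h1.symm, this.trans h1.symm⟩
  have hδa : δ a = (x, x) := by
    rw [Prod.ext_iff]
    exact ⟨rfl, hsym a⟩
  have : a = x := hinj (hδa.trans hδx.symm)
  rw [hδa, ← this]
end

section
/- Let Q be a nontrivial cancellative commutative quantale, A a set, and M : A → A → A → Q a Frobenius algebra in Rel(Q), i.e. satisfying axioms (M), (C), (A), (F) as in the context. Then every nonzero matrix entry is a square root of unity: for all a, b, c ∈ A, if M a b c ≠ ⊥ then M a b c * M a b c = 1. -/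
open scoped Classical

section aux

variable {Q : Type*} [CompleteLattice Q] {ι : Sort*}

private lemma aux_collapse (f : ι → Q) (i₀ : ι) (h : ∀ i, i ≠ i₀ → f i = ⊥) :
    (⨆ i, f i) = f i₀ := by
  refine le_antisymm (iSup_le fun i => ?_) (le_iSup f i₀)
  by_cases hi : i = i₀
  · exact hi ▸ le_rfl
  · simp [h i hi]

private lemma aux_exists_ne_bot (f : ι → Q) (h : (⨆ i, f i) ≠ ⊥) : ∃ i, f i ≠ ⊥ := by
  by_contra hc
  push_neg at hc
  exact h (by simp [iSup_eq_bot, hc])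

private lemma aux_ne_bot_of_term (f : ι → Q) (i : ι) (h : f i ≠ ⊥) : (⨆ j, f j) ≠ ⊥ :=
  fun hb => h (le_bot_iff.1 (hb ▸ le_iSup f i))

private lemma aux_sup_mem (f : ι → Q) (q : Q) (h : ∀ i, f i = ⊥ ∨ f i = q) :
    (⨆ i, f i) = ⊥ ∨ (⨆ i, f i) = q := by
  by_cases hc : ∀ i, f i = ⊥
  · left; simp [iSup_eq_bot, hc]
  · right
    push_neg at hc
    obtain ⟨i, hi⟩ := hc
    have hiq : f i = q := (h i).resolve_left hi
    refine le_antisymm (iSup_le fun j => ?_) (hiq ▸ le_iSup f i)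
    rcases h j with hj | hj
    · simp [hj]
    · simp [hj]

private lemma aux_sup_const (f : ι → Q) (i₀ : ι) (q : Q) (h0 : f i₀ = q)
    (h : ∀ i, f i = ⊥ ∨ f i = q) : (⨆ i, f i) = q := by
  refine le_antisymm (iSup_le fun j => ?_) (h0 ▸ le_iSup f i₀)
  rcases h j with hj | hj
  · simp [hj]
  · simp [hj]

end aux

/-- For a Frobenius algebra in Rel(Q) over a nontrivial cancellative commutative
quantale, every nonzero matrix entry is a square root of unity. -/
theorem relQ_frobenius_entries_sqrt_unity {Q : Type*} [CompleteLattice Q] [CommMonoid Q]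
    (hdist : ∀ (x : Q) (S : Set Q), x * sSup S = ⨆ y ∈ S, x * y)
    (hcancel : ∀ x y z : Q, x * y = x * z → x = ⊥ ∨ y = z)
    (hnontriv : (1 : Q) ≠ ⊥)
    {A : Type*} (M : A → A → A → Q)
    (hM : ∀ a a' : A, (⨆ x : A, ⨆ y : A, M x y a * M x y a') =
      if a = a' then (1 : Q) else ⊥)
    (hC : ∀ a b c : A, M a b c = M b a c)
    (hA : ∀ a b c z : A, (⨆ w : A, M a b w * M w c z) = ⨆ w : A, M b c w * M a w z)
    (hF : ∀ a b c d : A, (⨆ e : A, M a b e * M c d e) = ⨆ b₁ : A, M b₁ d b * M a b₁ c) :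
    ∀ a b c : A, M a b c ≠ ⊥ → M a b c * M a b c = 1 := by
  -- basic quantale facts
  have hmulbot : ∀ x : Q, x * ⊥ = ⊥ := by
    intro x
    simpa using hdist x ∅
  have hbotmul : ∀ x : Q, ⊥ * x = ⊥ := fun x => by rw [mul_comm]; exact hmulbot x
  have hnzd : ∀ x y : Q, x ≠ ⊥ → y ≠ ⊥ → x * y ≠ ⊥ := by
    intro x y hx hy hxy
    rcases hcancel x y ⊥ (by rw [hmulbot, hxy]) with h | h
    exacts [hx h, hy h]
  have hfac : ∀ x y : Q, x * y ≠ ⊥ → x ≠ ⊥ ∧ y ≠ ⊥ := by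
    intro x y h
    constructor
    · rintro rfl; exact h (hbotmul y)
    · rintro rfl; exact h (hmulbot x)
  -- single-valuedness: the third argument is unique on the support
  have hSV : ∀ x y c c' : A, M x y c ≠ ⊥ → M x y c' ≠ ⊥ → c = c' := by
    intro x y c c' h1 h2
    by_contra hne
    have h := hM c c'
    rw [if_neg hne] at h
    have hb : M x y c * M x y c' = ⊥ := by
      have hle : M x y c * M x y c' ≤ ⊥ := by
        calc M x y c * M x y c' ≤ ⨆ yy, M x yy c * M x yy c' :=
              le_iSup (fun yy => M x yy c * M x yy c') y
          _ ≤ ⨆ xx, ⨆ yy, M xx yy c * M xx yy c' :=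
              le_iSup (fun xx => ⨆ yy, M xx yy c * M xx yy c') x
          _ = ⊥ := h
      exact le_bot_iff.1 hle
    exact hnzd _ _ h1 h2 hb
  -- existence of a (left unit of y, right unit of x) pair, from Frobenius
  have hU : ∀ x y z : A, M x y z ≠ ⊥ → ∃ w, M w y y ≠ ⊥ ∧ M x w x ≠ ⊥ := by
    intro x y z hxyz
    have h := hF x y x y
    have hL : (⨆ e, M x y e * M x y e) ≠ ⊥ :=
      aux_ne_bot_of_term _ z (hnzd _ _ hxyz hxyz)
    have hR : (⨆ b₁, M b₁ y y * M x b₁ x) ≠ ⊥ := by rw [← h]; exact hL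
    obtain ⟨w, hw⟩ := aux_exists_ne_bot _ hR
    exact ⟨w, hfac _ _ hw⟩
  -- a left unit of x equals any right unit of x, and an "inverse-like" witness
  have hLR : ∀ x w w' : A, M w x x ≠ ⊥ → M x w' x ≠ ⊥ →
      w = w' ∧ ∃ b₁, M x b₁ w ≠ ⊥ := by
    intro x w w' hw hw'
    have h := hF x w' w x
    have hL : (⨆ e, M x w' e * M w x e) ≠ ⊥ :=
      aux_ne_bot_of_term _ x (hnzd _ _ hw' hw)
    have hR : (⨆ b₁, M b₁ x w' * M x b₁ w) ≠ ⊥ := by rw [← h]; exact hL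
    obtain ⟨b₁, hb₁⟩ := aux_exists_ne_bot _ hR
    obtain ⟨h1, h2⟩ := hfac _ _ hb₁
    have h1' : M x b₁ w' ≠ ⊥ := by rw [hC x b₁ w']; exact h1
    exact ⟨hSV x b₁ w w' h2 h1', b₁, h2⟩
  -- a left unit of x is a left unit of everything x divides on the left
  have hRuleL : ∀ w x y z : A, M w x x ≠ ⊥ → M x y z ≠ ⊥ → M w z z ≠ ⊥ := by
    intro w x y z hwx hxyz
    have h := hA w x y z
    have hL : (⨆ v, M w x v * M v y z) ≠ ⊥ :=
      aux_ne_bot_of_term _ x (hnzd _ _ hwx hxyz)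
    have hR : (⨆ v, M x y v * M w v z) ≠ ⊥ := by rw [← h]; exact hL
    obtain ⟨v, hv⟩ := aux_exists_ne_bot _ hR
    obtain ⟨h1, h2⟩ := hfac _ _ hv
    have hvz : v = z := hSV x y v z h1 hxyz
    rw [hvz] at h2; exact h2
  -- the quantitative key identity from Frobenius, given uniqueness of left units
  have hkey : ∀ x y z u' : A, M x y z ≠ ⊥ → (∀ w, M w y y ≠ ⊥ → w = u') →
      M x y z * M x y z = M u' y y * M x u' x := by
    intro x y z u' hxyz huniq
    have h := hF x y x y
    have hLc : (⨆ e, M x y e * M x y e) = M x y z * M x y z := by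
      apply aux_collapse
      intro e he
      have hb : M x y e = ⊥ := by
        by_contra hne
        exact he (hSV x y e z hne hxyz)
      rw [hb, hbotmul]
    have hRc : (⨆ w, M w y y * M x w x) = M u' y y * M x u' x := by
      apply aux_collapse
      intro w hw
      have hb : M w y y = ⊥ := by
        by_contra hne
        exact hw (huniq w hne)
      rw [hb, hbotmul]
    rw [hLc, hRc] at h
    exact h
  -- main argument
  intro a b c hm
  obtain ⟨u, hub, hau⟩ := hU a b c hm
  have hbac : M b a c ≠ ⊥ := by rw [← hC]; exact hm
  obtain ⟨w', hw'a, hbw'⟩ := hU b a c hbac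
  have huw' : u = w' := (hLR b u w' hub hbw').1
  have hbu : M b u b ≠ ⊥ := by rw [huw']; exact hbw'
  obtain ⟨-, b₁, hbb₁u⟩ := hLR b u u hub hbu
  have huuu : M u u u ≠ ⊥ := hRuleL u b b₁ u hub hbb₁u
  -- uniqueness of left units of b and of u
  have hLu : ∀ w, M w b b ≠ ⊥ → w = u := fun w hw => (hLR b w u hw hbu).1
  have hLuu : ∀ w, M w u u ≠ ⊥ → w = u := fun w hw => (hLR u w u hw huuu).1
  -- the square of any nonzero entry with third argument u equals (M u u u)^2,
  -- and more generally we compute squares via hkey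
  have hsq : ∀ x y : A, M x y u ≠ ⊥ → M x y u * M x y u = M u u u * M u u u := by
    intro x y hxy
    obtain ⟨w, hwy, hxw⟩ := hU x y u hxy
    have hyxu : M y x u ≠ ⊥ := by rw [← hC]; exact hxy
    have hLy : ∀ v, M v y y ≠ ⊥ → v = u := fun v hv =>
      hLuu v (hRuleL v y x u hv hyxu)
    have hwu : w = u := hLy w hwy
    have huy : M u y y ≠ ⊥ := by rw [← hwu]; exact hwy
    have hxu : M x u x ≠ ⊥ := by rw [← hwu]; exact hxw
    have e1 : M u y y = M u u u := by
      have h' := hkey u y y u huy hLy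
      rcases hcancel _ _ _ h' with hc | hc
      · exact absurd hc huy
      · exact hc
    have e2 : M x u x = M u u u := by
      have h' := hkey x u x u hxu hLuu
      rw [mul_comm (M u u u) (M x u x)] at h'
      rcases hcancel _ _ _ h' with hc | hc
      · exact absurd hc hxu
      · exact hc
    have h3 := hkey x y u u hxy hLy
    rw [h3, e1, e2]
  -- (M u u u)^2 = 1, from the specialness axiom at u
  have hq1 : M u u u * M u u u = 1 := by
    have h := hM u u
    rw [if_pos rfl] at h
    have hterm : ∀ x y : A, M x y u * M x y u = ⊥ ∨
        M x y u * M x y u = M u u u * M u u u := by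
      intro x y
      by_cases hxy : M x y u = ⊥
      · left; rw [hxy, hbotmul]
      · right; exact hsq x y hxy
    have houter : (⨆ x, ⨆ y, M x y u * M x y u) = M u u u * M u u u := by
      apply aux_sup_const _ u
      · exact aux_sup_const _ u _ rfl (fun y => hterm u y)
      · intro x
        exact aux_sup_mem _ _ (fun y => hterm x y)
    rw [← houter]; exact h
  -- conclude: (M a b c)^2 = (M u u u)^2 = 1
  have hmain := hkey a b c u hm hLu
  have e1 : M u b b = M u u u := by
    have h' := hkey u b b u hub hLu
    rcases hcancel _ _ _ h' with hc | hc
    · exact absurd hc hub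
    · exact hc
  have e2 : M a u a = M u u u := by
    have h' := hkey a u a u hau hLuu
    rw [mul_comm (M u u u) (M a u a)] at h'
    rcases hcancel _ _ _ h' with hc | hc
    · exact absurd hc hau
    · exact hc
  rw [hmain, e1, e2, hq1]
end

section
/- Let Q be a nontrivial cancellative commutative quantale, A a set, and M : A → A → A → Q a Frobenius algebra in Rel(Q), i.e. satisfying axioms (M), (C), (A), (F) as in the context. If e ∈ A acts as an identity on elements of its summand, then the corresponding entries agree: for all a, b, e ∈ A, if M a e a ≠ ⊥ and M b e b ≠ ⊥ then M a e a = M b e b. -/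
open scoped Classical

/-- For a Frobenius algebra in Rel(Q) over a nontrivial cancellative commutative
quantale, identity entries on a summand agree. -/
theorem relQ_frobenius_unit_entries_agree {Q : Type*} [CompleteLattice Q] [CommMonoid Q]
    (hdist : ∀ (x : Q) (S : Set Q), x * sSup S = ⨆ y ∈ S, x * y)
    (hcancel : ∀ x y z : Q, x * y = x * z → x = ⊥ ∨ y = z)
    (hnontriv : (1 : Q) ≠ ⊥)
    {A : Type*} (M : A → A → A → Q)
    (hM : ∀ a a' : A, (⨆ x : A, ⨆ y : A, M x y a * M x y a') =
      if a = a' then (1 : Q) else ⊥)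
    (hC : ∀ a b c : A, M a b c = M b a c)
    (hA : ∀ a b c z : A, (⨆ w : A, M a b w * M w c z) = ⨆ w : A, M b c w * M a w z)
    (hF : ∀ a b c d : A, (⨆ e : A, M a b e * M c d e) = ⨆ b₁ : A, M b₁ d b * M a b₁ c) :
    ∀ a b e : A, M a e a ≠ ⊥ → M b e b ≠ ⊥ → M a e a = M b e b := by
  -- basic facts
  have mul_bot' : ∀ x : Q, x * (⊥ : Q) = ⊥ := by
    intro x
    have h := hdist x ∅
    simpa using h
  have bot_mul' : ∀ x : Q, (⊥ : Q) * x = ⊥ := by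
    intro x; rw [mul_comm]; exact mul_bot' x
  have noZero : ∀ p q : Q, p * q = ⊥ → p = ⊥ ∨ q = ⊥ := by
    intro p q h
    exact hcancel p q ⊥ (by rw [mul_bot']; exact h)
  -- off-diagonal entries annihilate
  have offdiag : ∀ (x y z z' : A), z ≠ z' → M x y z * M x y z' = ⊥ := by
    intro x y z z' h
    have hm := hM z z'
    rw [if_neg h] at hm
    have hle : M x y z * M x y z' ≤ ⊥ := by
      calc M x y z * M x y z' ≤ ⨆ x : A, ⨆ y : A, M x y z * M x y z' :=
            le_iSup_of_le x (le_iSup_of_le y le_rfl)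
        _ = ⊥ := hm
    exact le_bot_iff.mp hle
  -- functionality: M x y · is supported on at most one point
  have func : ∀ (x y z z' : A), M x y z ≠ ⊥ → z' ≠ z → M x y z' = ⊥ := by
    intro x y z z' hz hne
    rcases noZero _ _ (offdiag x y z' z hne) with h | h
    · exact h
    · exact absurd h hz
  -- collapsing suprema supported at one point
  have collapse : ∀ (f : A → Q) (a : A), (∀ x, x ≠ a → f x = ⊥) →
      (⨆ x : A, f x) = f a := by
    intro f a h
    apply le_antisymm
    · apply iSup_le
      intro x
      by_cases hx : x = a
      · subst hx; exact le_rfl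
      · rw [h x hx]; exact bot_le
    · exact le_iSup f a
  -- key lemma: M a e a ≠ ⊥ → M a e a = M e e e
  have key : ∀ a e : A, M a e a ≠ ⊥ → M a e a = M e e e := by
    intro a e hu
    -- there is an "inverse" a' with M a a' e ≠ ⊥
    have husq : M a e a * M a e a ≠ ⊥ := by
      intro h; rcases noZero _ _ h with h | h <;> exact hu h
    have hLHS : (⨆ x : A, M a e x * M e a x) = M a e a * M e a a := by
      apply collapse (fun x => M a e x * M e a x)
      intro x hx
      rw [func a e a x hu hx, bot_mul']
    have hF1 := hF a e e a
    rw [hLHS, hC e a a] at hF1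
    have hex : ∃ b₁ : A, M b₁ a e * M a b₁ e ≠ ⊥ := by
      by_contra hcon
      push_neg at hcon
      have hbot : (⨆ b₁ : A, M b₁ a e * M a b₁ e) = ⊥ := by
        rw [iSup_eq_bot]; exact hcon
      exact husq (hF1.trans hbot)
    obtain ⟨a', ha'⟩ := hex
    have hr : M a a' e ≠ ⊥ := by
      intro h
      apply ha'
      rw [h, mul_bot']
    -- associativity instance collapsing to r * Meee = r * u
    have hAs := hA a' a e e
    have hL : (⨆ w : A, M a' a w * M w e e) = M a' a e * M e e e := by
      apply collapse (fun w => M a' a w * M w e e)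
      intro w hw
      rw [hC a' a w, func a a' e w hr hw, bot_mul']
    have hR : (⨆ w : A, M a e w * M a' w e) = M a e a * M a' a e := by
      apply collapse (fun w => M a e w * M a' w e)
      intro w hw
      rw [func a e a w hu hw, bot_mul']
    rw [hL, hR] at hAs
    -- cancel M a a' e
    have hAs' : M a a' e * M e e e = M a a' e * M a e a := by
      calc M a a' e * M e e e = M a' a e * M e e e := by rw [hC a a']
        _ = M a e a * M a' a e := hAs
        _ = M a a' e * M a e a := by rw [hC a' a, mul_comm]
    rcases hcancel _ _ _ hAs' with h | h
    · exact absurd h hr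
    · exact h.symm
  intro a b e ha hb
  rw [key a e ha, key b e hb]
end

section
/- Let Q be a nontrivial cancellative commutative quantale in which q * q = 1 implies q = 1, let A be a set, and let M : A → A → A → Q be a Frobenius algebra in Rel(Q), i.e. satisfying axioms (M), (C), (A), (F) as in the context. Then axiom (H) holds: there exists star : A → A such that M (star a) b c = M a c b for all a, b, c ∈ A. -/
open scoped Classical

/-- If all values of `g` other than `g i₀` are `⊥`, the supremum of `g` is `g i₀`. -/
lemma relQ_sup_eq_single {Q : Type*} [CompleteLattice Q] {ι : Sort*} (g : ι → Q) (i₀ : ι)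
    (h : ∀ i, i ≠ i₀ → g i = ⊥) : (⨆ i, g i) = g i₀ := by
  refine le_antisymm (iSup_le fun i => ?_) (le_iSup g i₀)
  by_cases hi : i = i₀
  · subst hi; exact le_rfl
  · rw [h i hi]; exact bot_le

/-- For a Frobenius algebra in Rel(Q) over a nontrivial cancellative commutative
quantale in which `q * q = 1` implies `q = 1`, axiom (H) holds. -/
theorem relQ_frobenius_satisfies_H {Q : Type*} [CompleteLattice Q] [CommMonoid Q]
    (hdist : ∀ (x : Q) (S : Set Q), x * sSup S = ⨆ y ∈ S, x * y)
    (hcancel : ∀ x y z : Q, x * y = x * z → x = ⊥ ∨ y = z)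
    (hnontriv : (1 : Q) ≠ ⊥)
    (hsq : ∀ q : Q, q * q = 1 → q = 1)
    {A : Type*} (M : A → A → A → Q)
    (hM : ∀ a a' : A, (⨆ x : A, ⨆ y : A, M x y a * M x y a') =
      if a = a' then (1 : Q) else ⊥)
    (hC : ∀ a b c : A, M a b c = M b a c)
    (hA : ∀ a b c z : A, (⨆ w : A, M a b w * M w c z) = ⨆ w : A, M b c w * M a w z)
    (hF : ∀ a b c d : A, (⨆ e : A, M a b e * M c d e) = ⨆ b₁ : A, M b₁ d b * M a b₁ c) :
    ∃ star : A → A, ∀ a b c : A, M (star a) b c = M a c b := by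
  classical
  -- basic quantale facts
  have hbot : ∀ x : Q, x * ⊥ = ⊥ := by
    intro x
    simpa using hdist x ∅
  have hbot' : ∀ x : Q, ⊥ * x = ⊥ := by
    intro x; rw [mul_comm]; exact hbot x
  have hnz : ∀ p q : Q, p ≠ ⊥ → q ≠ ⊥ → p * q ≠ ⊥ := by
    intro p q hp hq h
    rcases hcancel p q ⊥ (by rw [h, hbot]) with h' | h'
    · exact hp h'
    · exact hq h'
  have hmulne : ∀ {p q : Q}, p * q ≠ ⊥ → p ≠ ⊥ ∧ q ≠ ⊥ := by
    intro p q h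
    constructor
    · intro hp; exact h (by rw [hp, hbot'])
    · intro hq; exact h (by rw [hq, hbot])
  -- suprema and ⊥
  have hterm : ∀ (f : A → Q) (i : A), f i ≠ ⊥ → (⨆ j, f j) ≠ ⊥ := by
    intro f i h hb
    exact h (le_bot_iff.mp ((le_iSup f i).trans hb.le))
  have hsupA : ∀ (f : A → Q), (⨆ i, f i) ≠ ⊥ → ∃ i, f i ≠ ⊥ := by
    intro f h
    by_contra hc
    push_neg at hc
    exact h (iSup_eq_bot.mpr hc)
  -- single-valuedness of the partial multiplication
  have hsv : ∀ {x y a a' : A}, M x y a ≠ ⊥ → M x y a' ≠ ⊥ → a = a' := by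
    intro x y a a' ha ha'
    by_contra hne
    have h1 := hM a a'
    rw [if_neg hne] at h1
    have h2 : M x y a * M x y a' = ⊥ := by
      have hle : M x y a * M x y a' ≤ ⊥ := by
        calc M x y a * M x y a' ≤ ⨆ y', M x y' a * M x y' a' :=
              le_iSup (fun y' => M x y' a * M x y' a') y
          _ ≤ ⨆ x', ⨆ y', M x' y' a * M x' y' a' :=
              le_iSup (fun x' => ⨆ y', M x' y' a * M x' y' a') x
          _ = ⊥ := h1
      exact le_bot_iff.mp hle
    exact hnz _ _ ha ha' h2
  -- commutativity on supports
  have hPc : ∀ {x y c : A}, M x y c ≠ ⊥ → M y x c ≠ ⊥ := by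
    intro x y c h
    rw [hC]; exact h
  -- existence: every element is a product
  have hE : ∀ a : A, ∃ x y : A, M x y a ≠ ⊥ := by
    intro a
    have h1 := hM a a
    rw [if_pos rfl] at h1
    have h2 : (⨆ x : A, ⨆ y : A, M x y a * M x y a) ≠ ⊥ := by
      rw [h1]; exact hnontriv
    obtain ⟨x, hx⟩ := hsupA _ h2
    obtain ⟨y, hy⟩ := hsupA _ hx
    exact ⟨x, y, (hmulne hy).1⟩
  -- associativity on supports
  have hAsupp : ∀ a b c z : A,
      (∃ w, M a b w ≠ ⊥ ∧ M w c z ≠ ⊥) ↔ (∃ w, M b c w ≠ ⊥ ∧ M a w z ≠ ⊥) := by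
    intro a b c z
    have h := hA a b c z
    constructor
    · rintro ⟨w, h1, h2⟩
      have hne : (⨆ w, M b c w * M a w z) ≠ ⊥ := by
        rw [← h]; exact hterm _ w (hnz _ _ h1 h2)
      obtain ⟨w', hw'⟩ := hsupA _ hne
      exact ⟨w', hmulne hw'⟩
    · rintro ⟨w, h1, h2⟩
      have hne : (⨆ w, M a b w * M w c z) ≠ ⊥ := by
        rw [h]; exact hterm _ w (hnz _ _ h1 h2)
      obtain ⟨w', hw'⟩ := hsupA _ hne
      exact ⟨w', hmulne hw'⟩
  -- Frobenius on supports
  have hFsupp : ∀ a b c d : A,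
      (∃ e, M a b e ≠ ⊥ ∧ M c d e ≠ ⊥) ↔ (∃ h, M h d b ≠ ⊥ ∧ M a h c ≠ ⊥) := by
    intro a b c d
    have h := hF a b c d
    constructor
    · rintro ⟨e, h1, h2⟩
      have hne : (⨆ b₁, M b₁ d b * M a b₁ c) ≠ ⊥ := by
        rw [← h]; exact hterm _ e (hnz _ _ h1 h2)
      obtain ⟨w', hw'⟩ := hsupA _ hne
      exact ⟨w', hmulne hw'⟩
    · rintro ⟨g, h1, h2⟩
      have hne : (⨆ e, M a b e * M c d e) ≠ ⊥ := by
        rw [h]; exact hterm _ g (hnz _ _ h1 h2)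
      obtain ⟨w', hw'⟩ := hsupA _ hne
      exact ⟨w', hmulne hw'⟩
  -- associativity on values
  have hAval : ∀ a b c z w : A, M a b w ≠ ⊥ → M w c z ≠ ⊥ →
      ∃ w₂, M b c w₂ ≠ ⊥ ∧ M a w₂ z ≠ ⊥ ∧
        M a b w * M w c z = M b c w₂ * M a w₂ z := by
    intro a b c z w h1 h2
    obtain ⟨w₂, h3, h4⟩ := (hAsupp a b c z).mp ⟨w, h1, h2⟩
    refine ⟨w₂, h3, h4, ?_⟩
    have hl : (⨆ w', M a b w' * M w' c z) = M a b w * M w c z := by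
      refine relQ_sup_eq_single _ w fun i hi => ?_
      have : M a b i = ⊥ := by
        by_contra hb
        exact hi (hsv hb h1)
      rw [this, hbot']
    have hr : (⨆ w', M b c w' * M a w' z) = M b c w₂ * M a w₂ z := by
      refine relQ_sup_eq_single _ w₂ fun i hi => ?_
      have : M b c i = ⊥ := by
        by_contra hb
        exact hi (hsv hb h3)
      rw [this, hbot']
    rw [← hl, ← hr]
    exact hA a b c z
  -- L1: units exist
  have hL1 : ∀ b : A, ∃ u, M u b b ≠ ⊥ := by
    intro b
    obtain ⟨x, y, hxy⟩ := hE b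
    obtain ⟨h, hh1, hh2⟩ := (hFsupp x y x y).mp ⟨b, hxy, hxy⟩
    -- hh1 : M h y y ≠ ⊥, hh2 : M x h x ≠ ⊥
    obtain ⟨w, hw1, hw2⟩ := (hAsupp h y x b).mp ⟨y, hh1, hPc hxy⟩
    -- hw1 : M y x w ≠ ⊥, hw2 : M h w b ≠ ⊥
    have : w = b := hsv hw1 (hPc hxy)
    exact ⟨h, this ▸ hw2⟩
  -- L3: division among units of b
  have hL3 : ∀ b h k : A, M h b b ≠ ⊥ → M k b b ≠ ⊥ →
      ∃ g, M g b b ≠ ⊥ ∧ M h g k ≠ ⊥ := by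
    intro b h k hh hk
    exact (hFsupp h b k b).mp ⟨b, hh, hk⟩
  -- L4: each b has an identity unit e with e ∘ k = k for all units k of b
  have hL4 : ∀ b : A, ∃ e, M e b b ≠ ⊥ ∧ ∀ k, M k b b ≠ ⊥ → M e k k ≠ ⊥ := by
    intro b
    obtain ⟨h₀, hh₀⟩ := hL1 b
    obtain ⟨e, he, heh₀⟩ := hL3 b h₀ h₀ hh₀ hh₀
    refine ⟨e, he, fun k hk => ?_⟩
    obtain ⟨g, hg, hg2⟩ := hL3 b h₀ k hh₀ hk
    -- hg2 : M h₀ g k ≠ ⊥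
    obtain ⟨w, hw1, hw2⟩ := (hAsupp e h₀ g k).mp ⟨h₀, hPc heh₀, hg2⟩
    have : w = k := hsv hw1 hg2
    exact this ▸ hw2
  choose e he1 he2 using hL4
  -- L7 preliminaries: squares are defined
  have hL5 : ∀ b : A, ∃ z, M b b z ≠ ⊥ := by
    intro b
    obtain ⟨z, hz, _⟩ := (hFsupp b b b b).mpr ⟨e b, he1 b, hPc (he1 b)⟩
    exact ⟨z, hz⟩
  -- L6: inverses exist : M b (s b) (e b) ≠ ⊥
  have hL6 : ∀ b : A, ∃ h, M b h (e b) ≠ ⊥ := by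
    intro b
    obtain ⟨z, hz⟩ := hL5 b
    have hez : M (e b) z z ≠ ⊥ := by
      obtain ⟨w, hw1, hw2⟩ := (hAsupp (e b) b b z).mp ⟨b, he1 b, hz⟩
      have : w = z := hsv hw1 hz
      exact this ▸ hw2
    obtain ⟨h, _, hh2⟩ := (hFsupp b b (e b) z).mp ⟨z, hz, hez⟩
    exact ⟨h, hh2⟩
  choose s hs using hL6
  -- L7: units are unique
  have hL7 : ∀ b k : A, M k b b ≠ ⊥ → k = e b := by
    intro b k hk
    have hke : M k (e b) k ≠ ⊥ := hPc (he2 b k hk)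
    obtain ⟨w, hw1, hw2⟩ := (hAsupp k b (s b) k).mpr ⟨e b, hs b, hke⟩
    -- hw1 : M k b w ≠ ⊥, hw2 : M w (s b) k ≠ ⊥
    have hwb : w = b := hsv hw1 hk
    rw [hwb] at hw2
    exact hsv hw2 (hs b)
  -- L8: composable elements and their product share the same identity
  have hL8 : ∀ a b z : A, M a b z ≠ ⊥ → e a = e z ∧ e b = e z := by
    intro a b z hab
    have h1 : e a = e z := by
      obtain ⟨w, hw1, hw2⟩ := (hAsupp (e a) a b z).mp ⟨a, he1 a, hab⟩
      have : w = z := hsv hw1 hab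
      exact hL7 z (e a) (this ▸ hw2)
    have h2 : e b = e z := by
      obtain ⟨w, hw1, hw2⟩ := (hAsupp (e b) b a z).mp ⟨b, he1 b, hPc hab⟩
      have : w = z := hsv hw1 (hPc hab)
      exact hL7 z (e b) (this ▸ hw2)
    exact ⟨h1, h2⟩
  -- key: if x ∘ x' = e x then x ∘ c = b implies x' ∘ b = c
  have hkey : ∀ x x' c b : A, M x x' (e x) ≠ ⊥ → M x c b ≠ ⊥ → M x' b c ≠ ⊥ := by
    intro x x' c b hxx' hxc
    have hcx : e c = e x := by
      obtain ⟨h1, h2⟩ := hL8 x c b hxc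
      rw [h1, h2]
    have hec : M (e x) c c ≠ ⊥ := by
      rw [← hcx]; exact he1 c
    obtain ⟨w, hw1, hw2⟩ := (hAsupp x' x c c).mp ⟨e x, hPc hxx', hec⟩
    -- hw1 : M x c w ≠ ⊥, hw2 : M x' w c ≠ ⊥
    have : w = b := hsv hw1 hxc
    exact this ▸ hw2
  -- inverse facts
  have hsa : ∀ a : A, M (s a) a (e (s a)) ≠ ⊥ := by
    intro a
    have h := hL8 a (s a) (e a) (hs a)
    -- h.1 : e a = e (e a), h.2 : e (s a) = e (e a)
    have : e (s a) = e a := by rw [h.2, ← h.1]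
    rw [this]
    exact hPc (hs a)
  have hL9a : ∀ a c b : A, M a c b ≠ ⊥ → M (s a) b c ≠ ⊥ := by
    intro a c b h
    exact hkey a (s a) c b (hs a) h
  have hL9b : ∀ a b c : A, M (s a) b c ≠ ⊥ → M a c b ≠ ⊥ := by
    intro a b c h
    exact hkey (s a) a b c (hsa a) h
  -- values: a ∘ (e a) has the same value as (e a) ∘ (e a)
  have hVunit : ∀ a : A, M a (e a) a = M (e a) (e a) (e a) := by
    intro a
    have hae : M a (e a) a ≠ ⊥ := hPc (he1 a)
    obtain ⟨w₂, h1, h2, h3⟩ := hAval a (e a) (e a) a a hae hae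
    have hee : M (e a) (e a) (e a) ≠ ⊥ := he2 a (e a) (he1 a)
    have hw₂ : w₂ = e a := hsv h1 hee
    subst hw₂
    -- h3 : M a (e a) a * M a (e a) a = M (e a) (e a) (e a) * M a (e a) a
    rw [mul_comm (M (e a) (e a) (e a))] at h3
    rcases hcancel _ _ _ h3 with h' | h'
    · exact absurd h' hae
    · exact h'
  -- values: square of any defined entry
  have hVsq : ∀ a b z : A, M a b z ≠ ⊥ →
      M a b z * M a b z = M (e b) b b * M a (e b) a := by
    intro a b z hz
    have h := hF a b a b
    have hl : (⨆ e', M a b e' * M a b e') = M a b z * M a b z := by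
      refine relQ_sup_eq_single _ z fun i hi => ?_
      have : M a b i = ⊥ := by
        by_contra hb
        exact hi (hsv hb hz)
      rw [this, hbot']
    have hr : (⨆ b₁, M b₁ b b * M a b₁ a) = M (e b) b b * M a (e b) a := by
      refine relQ_sup_eq_single _ (e b) fun i hi => ?_
      by_contra hb
      obtain ⟨hb1, _⟩ := hmulne hb
      exact hi (hL7 b i hb1)
    rw [← hl, ← hr]
    exact h
  -- the identity entries are 1
  have hV4 : ∀ a : A, M (e a) (e a) (e a) = 1 := by
    intro a
    have h1 := hM a a
    rw [if_pos rfl] at h1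
    have hval : ∀ x y : A, M x y a ≠ ⊥ →
        M x y a * M x y a = M (e a) (e a) (e a) * M (e a) (e a) (e a) := by
      intro x y hxy
      obtain ⟨hex, hey⟩ := hL8 x y a hxy
      have h2 := hVsq x y a hxy
      rw [hC (e y) y y, hVunit y, hey] at h2
      have h3 : M x (e a) x = M (e a) (e a) (e a) := by
        rw [← hex, hVunit x, hex]
      rw [h3] at h2
      exact h2
    have hsup : (⨆ x : A, ⨆ y : A, M x y a * M x y a) =
        M (e a) (e a) (e a) * M (e a) (e a) (e a) := by
      obtain ⟨x₀, y₀, hx₀⟩ := hE a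
      refine le_antisymm (iSup_le fun x => iSup_le fun y => ?_) ?_
      · by_cases hxy : M x y a = ⊥
        · rw [hxy, hbot']; exact bot_le
        · rw [hval x y hxy]
      · calc M (e a) (e a) (e a) * M (e a) (e a) (e a)
            = M x₀ y₀ a * M x₀ y₀ a := (hval x₀ y₀ hx₀).symm
          _ ≤ ⨆ y, M x₀ y a * M x₀ y a := le_iSup (fun y => M x₀ y a * M x₀ y a) y₀
          _ ≤ ⨆ x, ⨆ y, M x y a * M x y a :=
              le_iSup (fun x => ⨆ y, M x y a * M x y a) x₀
    exact hsq _ (by rw [← hsup, h1])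
  -- all defined entries are 1
  have hVall : ∀ a b z : A, M a b z ≠ ⊥ → M a b z = 1 := by
    intro a b z hz
    obtain ⟨hea, heb⟩ := hL8 a b z hz
    have h2 := hVsq a b z hz
    rw [hC (e b) b b, hVunit b, hV4 b] at h2
    have h3 : M a (e b) a = 1 := by
      rw [heb, ← hea, hVunit a, hV4 a]
    rw [h3, one_mul] at h2
    exact hsq _ h2
  -- conclusion
  refine ⟨s, fun a b c => ?_⟩
  by_cases h1 : M (s a) b c = ⊥
  · have h2 : M a c b = ⊥ := by
      by_contra h2
      exact (hL9a a c b h2) h1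
    rw [h1, h2]
  · rw [hVall _ _ _ h1, hVall _ _ _ (hL9b a b c h1)]
end

section
/- Let A be a set and M : A → A → A → ℝ≥0 a Frobenius algebra in the category of nonnegative-real matrices with ℓ²-summable rows and columns, i.e. satisfying the ℓ²-summability conditions and axioms (M), (C), (A), (F) as in the context. Then each disjoint summand is finite and M is constant on it with value 1/√d where d is the summand's cardinality: for all a, b, c ∈ A with M a b c ≠ 0, the set S(a) := {x : A | ∃ y, M a x y ≠ 0} is finite, and (M a b c : ℝ) = 1 / Real.sqrt (S(a).toFinset.card). -/
open scoped NNReal Classical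

/-!
Write `x ∙ y = z` for `M x y z ≠ 0`. Since `∇ ∇† = id`, this partial operation is
single-valued, and (C), (A), (F) make it a partial commutative group: every `x` has a unique
unit `u` (`u ∙ x = x`), and the elements sharing a unit form a group. Writing `M(x, y)` for
the entry at `(x, y, x ∙ y)`, (F) at `(a, b, c, d) = (x, y, x, y)` collapses on each group to
`M(x, y)² = M(u, x) M(u, y)`; taking `y = u` gives `M(u, x) = M(u, u) =: μ`, so `M ≡ μ` there.
Finally (M) at `(a, a)` reads `|G| μ² = 1`, because the pairs with product `a` correspond to the
elements of the group `G` of `a`.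
-/

lemma tsum_mul_eq_of_forall_ne_zero {ι α : Type*} [NonUnitalNonAssocSemiring α] [NoZeroDivisors α]
    [TopologicalSpace α] {f g : ι → α} (i₀ : ι) (h : ∀ i, f i ≠ 0 → g i ≠ 0 → i = i₀) :
    ∑' i, f i * g i = f i₀ * g i₀ :=
  tsum_eq_single i₀ fun i hi => by
    by_contra hfg
    obtain ⟨hf, hg⟩ := mul_ne_zero_iff.1 hfg
    exact hi (h i hf hg)

lemma NNReal.tsum_mul_ne_zero_iff {ι : Type*} {f g : ι → ℝ≥0} (hfg : Summable fun i => f i * g i) :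
    ∑' i, f i * g i ≠ 0 ↔ ∃ i, f i ≠ 0 ∧ g i ≠ 0 := by
  simp only [ne_eq, hfg.tsum_eq_zero_iff, not_forall, mul_eq_zero, not_or]

lemma NNReal.summable_mul_of_summable_sq {ι : Type*} {f g : ι → ℝ≥0}
    (hf : Summable fun i => f i ^ 2) (hg : Summable fun i => g i ^ 2) :
    Summable fun i => f i * g i :=
  NNReal.summable_mul_of_Lp_Lq .two_two (by simpa only [NNReal.rpow_two] using hf)
    (by simpa only [NNReal.rpow_two] using hg)

lemma NNReal.finite_support_and_ncard_mul_eq {ι : Type*} {f : ι → ℝ≥0} {c s : ℝ≥0}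
    (hf : HasSum f s) (hfc : ∀ i, f i ≠ 0 → f i = c) :
    (Function.support f).Finite ∧ (Function.support f).ncard * c = s := by
  have hfin : (Function.support f).Finite := by
    rcases eq_or_ne c 0 with rfl | hc
    · exact Set.finite_empty.subset fun i hi => hi (hfc i hi)
    · refine (Filter.eventually_cofinite.1 <| (NNReal.tendsto_cofinite_zero_of_summable
        hf.summable).eventually (gt_mem_nhds (pos_iff_ne_zero.2 hc))).subset fun i hi => ?_
      simp [hfc i hi]
  refine ⟨hfin, ?_⟩
  have hsum : HasSum f (∑ i ∈ hfin.toFinset, f i) :=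
    hasSum_sum_of_ne_finset_zero fun i hi => by simpa using hi
  rw [hf.unique hsum, Finset.sum_congr rfl fun i hi => hfc i (hfin.mem_toFinset.1 hi),
    Finset.sum_const, nsmul_eq_mul, Set.ncard_eq_toFinset_card _ hfin]

lemma NNReal.coe_eq_one_div_sqrt_of_mul_self {μ : ℝ≥0} {n : ℕ} (h : (n : ℝ≥0) * (μ * μ) = 1) :
    (μ : ℝ) = 1 / Real.sqrt n := by
  have h' : Real.sqrt n * μ = 1 := by
    have hR : (n : ℝ) * (μ * μ) = 1 := by exact_mod_cast congrArg ((↑) : ℝ≥0 → ℝ) h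
    rw [← Real.sqrt_mul_self μ.coe_nonneg, ← Real.sqrt_mul (Nat.cast_nonneg n), hR, Real.sqrt_one]
  rw [eq_div_iff (left_ne_zero_of_mul_eq_one h'), mul_comm, h']

/-- `T x y z` reads `x ∙ y = z` for a partial commutative multiplication. -/
structure IsCommFrobeniusRel {A : Type*} (T : A → A → A → Prop) : Prop where
  comm {x y z : A} : T x y z → T y x z
  functional {x y z z' : A} : T x y z → T x y z' → z = z'
  assoc (a b c z : A) : (∃ w, T a b w ∧ T w c z) ↔ ∃ w, T b c w ∧ T a w z
  frobenius (a b c d : A) : (∃ e, T a b e ∧ T c d e) ↔ ∃ w, T w d b ∧ T a w c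

namespace IsCommFrobeniusRel

variable {A : Type*} {T : A → A → A → Prop} {u v x y z : A}

lemma exists_common_unit (hT : IsCommFrobeniusRel T) (h : T x y z) :
    ∃ u, T u x x ∧ T u y y := by
  obtain ⟨w, hwy, hxw⟩ := (hT.frobenius x y x y).1 ⟨z, h, h⟩
  exact ⟨w, hT.comm hxw, hwy⟩

lemma exists_mul_eq (hT : IsCommFrobeniusRel T) (h : T x y z) : ∃ w, T x w y := by
  obtain ⟨w, -, hxw⟩ := (hT.frobenius x y y x).1 ⟨z, h, hT.comm h⟩
  exact ⟨w, hxw⟩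

lemma exists_mul (hT : IsCommFrobeniusRel T) (hx : T u x x) (hy : T u y y) : ∃ z, T x y z := by
  obtain ⟨z, hz, -⟩ := (hT.frobenius x y x y).2 ⟨u, hy, hT.comm hx⟩
  exact ⟨z, hz⟩

lemma unit_of_mul (hT : IsCommFrobeniusRel T) (h : T x y z) (hu : T u x x) : T u z z := by
  obtain ⟨w, hxy, huw⟩ := (hT.assoc u x y z).1 ⟨x, hu, h⟩
  rwa [hT.functional hxy h] at huw

lemma unit_unique (hT : IsCommFrobeniusRel T) (hu : T u x x) (hv : T v x x) : u = v := by
  have unit_of_common_unit : ∀ {u v}, T u x x → T v x x → T v u u := fun hu hv => by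
    obtain ⟨w, hw⟩ := hT.exists_mul_eq (hT.comm hu)
    exact hT.unit_of_mul hw hv
  exact hT.functional (hT.comm (unit_of_common_unit hu hv)) (unit_of_common_unit hv hu)

lemma unit_of_mul_left (hT : IsCommFrobeniusRel T) (h : T x y z) (hu : T u x x) : T u y y := by
  obtain ⟨v, hv, hvy⟩ := hT.exists_common_unit h
  rwa [hT.unit_unique hv hu] at hvy

lemma cancel (hT : IsCommFrobeniusRel T) (h : T x y z) (h' : T x v z) : y = v := by
  obtain ⟨w, hwv, hxw⟩ := (hT.frobenius x y x v).1 ⟨z, h, h'⟩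
  exact hT.functional hwv (hT.unit_of_mul_left h' (hT.comm hxw))

lemma image_fst_setOf (hT : IsCommFrobeniusRel T) (a : A) :
    Prod.fst '' {p : A × A | T p.1 p.2 a} = {x | ∃ y, T a x y} := by
  ext x
  constructor
  · rintro ⟨⟨x, w⟩, h, rfl⟩
    obtain ⟨u, hux, -⟩ := hT.exists_common_unit h
    exact hT.exists_mul (hT.unit_of_mul h hux) hux
  · rintro ⟨y, h⟩
    obtain ⟨w, hw⟩ := hT.exists_mul_eq (hT.comm h)
    exact ⟨(x, w), hw, rfl⟩

lemma injOn_fst (hT : IsCommFrobeniusRel T) (a : A) :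
    Set.InjOn Prod.fst {p : A × A | T p.1 p.2 a} := by
  rintro ⟨x, y⟩ h ⟨x', y'⟩ h' (rfl : x = x')
  exact congrArg (Prod.mk x) (hT.cancel h h')

end IsCommFrobeniusRel

/-- `special` is `∇ ∇† = id`, where `M a b c` is the entry of `∇` at `((a, b), c)`. -/
structure IsFrobeniusMatrix {A : Type*} (M : A → A → A → ℝ≥0) : Prop where
  special (a a' : A) :
    HasSum (fun p : A × A => M p.1 p.2 a * M p.1 p.2 a') (if a = a' then 1 else 0)
  comm (a b c : A) : M a b c = M b a c
  assoc (a b c z : A) : ∑' w, M a b w * M w c z = ∑' w, M b c w * M a w z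
  frobenius (a b c d : A) : ∑' e, M a b e * M c d e = ∑' b₁, M b₁ d b * M a b₁ c

namespace IsFrobeniusMatrix

variable {A : Type*} {M : A → A → A → ℝ≥0} {u x y z z' : A}

lemma functional (hM : IsFrobeniusMatrix M) (h : M x y z ≠ 0) (h' : M x y z' ≠ 0) :
    z = z' := by
  by_contra hne
  have hzero := hM.special z z'
  rw [if_neg hne] at hzero
  exact mul_ne_zero h h' ((hasSum_zero_iff.1 hzero) (x, y))

lemma summable_apply_mul (hM : IsFrobeniusMatrix M) (a b : A) (g : A → ℝ≥0) :
    Summable fun w => M a b w * g w := by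
  refine summable_of_hasFiniteSupport (Set.Subsingleton.finite fun w hw w' hw' => ?_)
  exact hM.functional (left_ne_zero_of_mul hw) (left_ne_zero_of_mul hw')

lemma summable_sq_apply_left (hM : IsFrobeniusMatrix M) (b c : A) :
    Summable fun w => M w b c ^ 2 := by
  simpa only [sq, Function.comp_def] using
    NNReal.summable_comp_injective (hM.special c c).summable (i := fun w => (w, b))
      fun _ _ h => congrArg Prod.fst h

lemma summable_sq_apply_right (hM : IsFrobeniusMatrix M) (a c : A) :
    Summable fun w => M a w c ^ 2 := by
  simpa only [sq, Function.comp_def] using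
    NNReal.summable_comp_injective (hM.special c c).summable (i := fun w => (a, w))
      fun _ _ h => congrArg Prod.snd h

lemma isCommFrobeniusRel (hM : IsFrobeniusMatrix M) :
    IsCommFrobeniusRel fun x y z => M x y z ≠ 0 where
  comm h := by rwa [hM.comm]
  functional := hM.functional
  assoc a b c z := by
    rw [← NNReal.tsum_mul_ne_zero_iff (hM.summable_apply_mul a b _),
      ← NNReal.tsum_mul_ne_zero_iff (hM.summable_apply_mul b c _), hM.assoc]
  frobenius a b c d := by
    rw [← NNReal.tsum_mul_ne_zero_iff (hM.summable_apply_mul a b _),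
      ← NNReal.tsum_mul_ne_zero_iff (NNReal.summable_mul_of_summable_sq
        (hM.summable_sq_apply_left d b) (hM.summable_sq_apply_right a c)), hM.frobenius]

lemma sq_apply_eq_mul (hM : IsFrobeniusMatrix M) (h : M x y z ≠ 0) (hu : M u x x ≠ 0) :
    M x y z ^ 2 = M u x x * M u y y := by
  have hL : ∑' e, M x y e * M x y e = M x y z * M x y z :=
    tsum_mul_eq_of_forall_ne_zero z fun _ he _ => hM.functional he h
  have hR : ∑' w, M w y y * M x w x = M u y y * M x u x :=
    tsum_mul_eq_of_forall_ne_zero u fun _ _ hw =>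
      hM.isCommFrobeniusRel.unit_unique (by rwa [hM.comm]) hu
  rw [sq, ← hL, hM.frobenius, hR, hM.comm x u x, mul_comm]

lemma apply_unit_eq (hM : IsFrobeniusMatrix M) (hu : M u x x ≠ 0) : M u x x = M u u u := by
  have h := hM.sq_apply_eq_mul (by rwa [hM.comm]) hu
  rw [hM.comm x u x, sq] at h
  exact mul_left_cancel₀ hu h

lemma apply_eq_of_unit_left (hM : IsFrobeniusMatrix M) (h : M x y z ≠ 0) (hu : M u x x ≠ 0) :
    M x y z = M u u u := by
  have hsq := hM.sq_apply_eq_mul h hu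
  have huy : M u y y ≠ 0 := right_ne_zero_of_mul (hsq ▸ pow_ne_zero 2 h)
  rw [hM.apply_unit_eq hu, hM.apply_unit_eq huy, ← sq] at hsq
  exact (pow_left_inj₀ zero_le zero_le two_ne_zero).1 hsq

lemma apply_eq_of_unit_result (hM : IsFrobeniusMatrix M) (h : M x y z ≠ 0) (hu : M u z z ≠ 0) :
    M x y z = M u u u := by
  obtain ⟨v, hv, -⟩ := hM.isCommFrobeniusRel.exists_common_unit h
  obtain rfl := hM.isCommFrobeniusRel.unit_unique (hM.isCommFrobeniusRel.unit_of_mul h hv) hu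
  exact hM.apply_eq_of_unit_left h hv

end IsFrobeniusMatrix

theorem l2mat_frobenius_summand_finite_general {A : Type*} (M : A → A → A → ℝ≥0)
    (hM : ∀ a a' : A, HasSum (fun p : A × A => M p.1 p.2 a * M p.1 p.2 a')
      (if a = a' then 1 else 0))
    (hC : ∀ a b c : A, M a b c = M b a c)
    (hA : ∀ a b c z : A, (∑' w : A, M a b w * M w c z) = ∑' w : A, M b c w * M a w z)
    (hF : ∀ a b c d : A, (∑' e : A, M a b e * M c d e) = ∑' b₁ : A, M b₁ d b * M a b₁ c) :
    ∀ a b c : A, M a b c ≠ 0 →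
      ∃ hfin : {x : A | ∃ y : A, M a x y ≠ 0}.Finite,
        (M a b c : ℝ) = 1 / Real.sqrt (hfin.toFinset.card) := by
  intro a b c habc
  have hMF : IsFrobeniusMatrix M := ⟨hM, hC, hA, hF⟩
  have hT := hMF.isCommFrobeniusRel
  obtain ⟨u, hu, -⟩ := hT.exists_common_unit habc
  obtain ⟨hPfin, hPcard⟩ := NNReal.finite_support_and_ncard_mul_eq (c := M u u u * M u u u)
    (by simpa using hM a a) fun p hp => by
      rw [hMF.apply_eq_of_unit_result (left_ne_zero_of_mul hp) hu]
  have hP : Function.support (fun p : A × A => M p.1 p.2 a * M p.1 p.2 a) =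
      {p | M p.1 p.2 a ≠ 0} := by
    ext p
    exact mul_self_ne_zero
  rw [hP] at hPfin hPcard
  have hS := hT.image_fst_setOf a
  have hSfin : {x : A | ∃ y : A, M a x y ≠ 0}.Finite := hS ▸ hPfin.image _
  refine ⟨hSfin, ?_⟩
  rw [hMF.apply_eq_of_unit_left habc hu, ← Set.ncard_eq_toFinset_card _ hSfin, ← hS,
    (hT.injOn_fst a).ncard_image]
  exact NNReal.coe_eq_one_div_sqrt_of_mul_self hPcard

/-- For a Frobenius algebra in the category of nonnegative-real matrices with
ℓ²-summable rows and columns, each disjoint summand is finite and the matrix is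
constant on it with value `1/√d`, where `d` is the cardinality of the summand. -/
theorem l2mat_frobenius_summand_finite {A : Type*} (M : A → A → A → ℝ≥0)
    (hrow : ∀ a : A, Summable (fun p : A × A => (M p.1 p.2 a) ^ 2))
    (hcol : ∀ x y : A, Summable (fun c : A => (M x y c) ^ 2))
    (hM : ∀ a a' : A, HasSum (fun p : A × A => M p.1 p.2 a * M p.1 p.2 a')
      (if a = a' then 1 else 0))
    (hC : ∀ a b c : A, M a b c = M b a c)
    (hA : ∀ a b c z : A, (∑' w : A, M a b w * M w c z) = ∑' w : A, M b c w * M a w z)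
    (hF : ∀ a b c d : A, (∑' e : A, M a b e * M c d e) = ∑' b₁ : A, M b₁ d b * M a b₁ c) :
    ∀ a b c : A, M a b c ≠ 0 →
      ∃ hfin : {x : A | ∃ y : A, M a x y ≠ 0}.Finite,
        (M a b c : ℝ) = 1 / Real.sqrt (hfin.toFinset.card) :=
  l2mat_frobenius_summand_finite_general M hM hC hA hF
end

section
/- Let A be a set and M : A → A → A → ℝ≥0 a Frobenius algebra in the category of nonnegative-real matrices with ℓ²-summable rows and columns, i.e. satisfying the ℓ²-summability conditions and axioms (M), (C), (A), (F) as in the context. Then axiom (H) holds: there exists star : A → A such that M (star a) b c = M a c b for all a, b, c ∈ A. -/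
open scoped NNReal Classical

/-!
Read `M x y z ≠ 0` as "`x * y = z` with weight `M x y z`". Orthogonality in (M) forces each
product `x * y` to be supported at a single point, so every sum in (A) and (F) collapses to one
term and the axioms become statements about a commutative partial magma with weights. Writing
`a = x * y`, Frobenius produces a local unit `e` with `a * e = a` and then an inverse `s` with
`s * a = e`. Comparing weights via (A) and (F), first for the stabilizers `w` of `a`
(`a * w = a`), shows that `e` fixes every `c` with `a * c` defined and that all weights
`M a c b` equal `M a e a`; one more associativity then gives `M s b c = M a c b`, and `s` is
the required `star a`.
-/

theorem exists_ne_zero_of_tsum_ne_zero {ι α : Type*} [AddCommMonoid α] [TopologicalSpace α]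
    {f : ι → α} (h : ∑' i, f i ≠ 0) : ∃ i, f i ≠ 0 := by
  contrapose! h
  simp [h]

namespace L2Frobenius

variable {A : Type*} {M : A → A → A → ℝ≥0}

def SingleValued (M : A → A → A → ℝ≥0) : Prop :=
  ∀ ⦃x y z z' : A⦄, M x y z ≠ 0 → M x y z' ≠ 0 → z = z'

def Commutative (M : A → A → A → ℝ≥0) : Prop :=
  ∀ a b c : A, M a b c = M b a c

def Associative (M : A → A → A → ℝ≥0) : Prop :=
  ∀ a b c z : A, (∑' w : A, M a b w * M w c z) = ∑' w : A, M b c w * M a w z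

def FrobeniusLaw (M : A → A → A → ℝ≥0) : Prop :=
  ∀ a b c d : A, (∑' e : A, M a b e * M c d e) = ∑' b₁ : A, M b₁ d b * M a b₁ c

def IsOrthonormal (M : A → A → A → ℝ≥0) : Prop :=
  ∀ a a' : A, HasSum (fun p : A × A => M p.1 p.2 a * M p.1 p.2 a') (if a = a' then 1 else 0)

theorem IsOrthonormal.singleValued (hM : IsOrthonormal M) : SingleValued M := by
  intro x y z z' hz hz'
  by_contra hne
  have hzero := (hM z z').summable.tsum_eq_zero_iff.mp ((hM z z').tsum_eq.trans (if_neg hne))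
  exact mul_ne_zero hz hz' (hzero (x, y))

theorem IsOrthonormal.exists_ne_zero (hM : IsOrthonormal M) (a : A) : ∃ x y, M x y a ≠ 0 := by
  have hsum : ∑' p : A × A, M p.1 p.2 a * M p.1 p.2 a ≠ 0 := by
    simp [(hM a a).tsum_eq]
  obtain ⟨⟨x, y⟩, hxy⟩ := exists_ne_zero_of_tsum_ne_zero hsum
  exact ⟨x, y, left_ne_zero_of_mul hxy⟩

namespace SingleValued

theorem tsum_mul_eq (hU : SingleValued M) {x y u : A} (hu : M x y u ≠ 0) (g : A → ℝ≥0) :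
    ∑' w, M x y w * g w = M x y u * g u :=
  tsum_eq_single u fun w hw => by
    rw [show M x y w = 0 from by_contra fun hw' => hw (hU hw' hu), zero_mul]

theorem assoc_weight (hU : SingleValued M) (hA : Associative M) {a b c u v : A}
    (hab : M a b u ≠ 0) (hbc : M b c v ≠ 0) (z : A) :
    M a b u * M u c z = M b c v * M a v z :=
  (hU.tsum_mul_eq hab fun w => M w c z).symm.trans
    ((hA a b c z).trans (hU.tsum_mul_eq hbc fun w => M a w z))

theorem exists_assoc (hU : SingleValued M) (hA : Associative M) {a b c u z : A}
    (hab : M a b u ≠ 0) (huc : M u c z ≠ 0) : ∃ v, M b c v ≠ 0 ∧ M a v z ≠ 0 := by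
  have hsum : ∑' w, M b c w * M a w z ≠ 0 := by
    rw [← hA, hU.tsum_mul_eq hab fun w => M w c z]
    exact mul_ne_zero hab huc
  obtain ⟨v, hv⟩ := exists_ne_zero_of_tsum_ne_zero hsum
  exact ⟨v, left_ne_zero_of_mul hv, right_ne_zero_of_mul hv⟩

theorem exists_frobenius (hU : SingleValued M) (hF : FrobeniusLaw M) {a b c d e : A}
    (hab : M a b e ≠ 0) (hcd : M c d e ≠ 0) : ∃ b₁, M b₁ d b ≠ 0 ∧ M a b₁ c ≠ 0 := by
  have hsum : ∑' w, M w d b * M a w c ≠ 0 := by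
    rw [← hF, hU.tsum_mul_eq hab fun w => M c d w]
    exact mul_ne_zero hab hcd
  obtain ⟨w, hw⟩ := exists_ne_zero_of_tsum_ne_zero hsum
  exact ⟨w, left_ne_zero_of_mul hw, right_ne_zero_of_mul hw⟩

theorem frobenius_mul_self (hU : SingleValued M) (hF : FrobeniusLaw M) {a b c : A}
    (hab : M a b c ≠ 0) : M a b c * M a b c = ∑' w, M w b b * M a w a :=
  (hU.tsum_mul_eq hab fun w => M a b w).symm.trans (hF a b a b)

end SingleValued

section LocalUnit

variable {s a e : A}

theorem weight_unit_mul_stabilizer (hU : SingleValued M) (hA : Associative M) (hsa : M s a e ≠ 0)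
    {w : A} (haw : M a w a ≠ 0) : M e w e = M a w a :=
  mul_left_cancel₀ hsa <| (hU.assoc_weight hA hsa haw e).trans (mul_comm _ _)

theorem stabilizer_fixes_unit_image (hU : SingleValued M) (hC : Commutative M) (hA : Associative M)
    (hsa : M s a e ≠ 0) {w : A} (haw : M a w a ≠ 0) {c u : A} (hecu : M e c u ≠ 0) :
    M w u u = M a w a := by
  have hwe : M w e e = M a w a := by rw [hC w e e, weight_unit_mul_stabilizer hU hA hsa haw]
  have hassoc := hU.assoc_weight hA (hwe ▸ haw : M w e e ≠ 0) hecu u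
  rw [← hwe]
  exact (mul_left_cancel₀ hecu ((mul_comm _ _).trans hassoc)).symm

theorem weight_unit_mul_self (hU : SingleValued M) (hC : Commutative M) (hA : Associative M)
    (hF : FrobeniusLaw M) (hsa : M s a e ≠ 0) (hae : M a e a ≠ 0) {c b : A}
    (hacb : M a c b ≠ 0) : M e c c = M a e a := by
  obtain ⟨c₁, hecc₁, hac₁b⟩ := hU.exists_assoc hA hae hacb
  -- `a * c = a * c₁` yields `w * c₁ = c` with `a * w = a`, and such `w` fix `c₁`
  have hc : c = c₁ := by
    obtain ⟨w, hwc₁c, haw⟩ := hU.exists_frobenius hF hacb hac₁b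
    exact hU hwc₁c (by rwa [stabilizer_fixes_unit_image hU hC hA hsa haw hecc₁])
  subst hc
  exact (mul_right_cancel₀ hacb (hU.assoc_weight hA hae hecc₁ b)).symm

theorem weight_eq_weight_unit (hU : SingleValued M) (hC : Commutative M) (hA : Associative M)
    (hF : FrobeniusLaw M) (hsa : M s a e ≠ 0) (hae : M a e a ≠ 0) {c b : A}
    (hacb : M a c b ≠ 0) : M a c b = M a e a := by
  have hsq : ∀ {c b : A}, M a c b ≠ 0 → M a c b * M a c b = ∑' w, M a w a * M a w a := by
    intro c b hacb
    have hecc : M e c c ≠ 0 := by rw [weight_unit_mul_self hU hC hA hF hsa hae hacb]; exact hae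
    rw [hU.frobenius_mul_self hF hacb]
    refine tsum_congr fun w => ?_
    by_cases haw : M a w a = 0
    · simp [haw]
    · rw [stabilizer_fixes_unit_image hU hC hA hsa haw hecc]
  exact (mul_self_inj zero_le zero_le).mp ((hsq hacb).trans (hsq hae).symm)

theorem star_weight (hU : SingleValued M) (hC : Commutative M) (hA : Associative M)
    (hF : FrobeniusLaw M) (hsa : M s a e ≠ 0) (hae : M a e a ≠ 0) {c b : A}
    (hacb : M a c b ≠ 0) : M s b c = M a c b := by
  have hassoc := hU.assoc_weight hA hsa hacb c
  have hacb_eq := weight_eq_weight_unit hU hC hA hF hsa hae hacb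
  rw [hC s a e, weight_eq_weight_unit hU hC hA hF hsa hae (hC s a e ▸ hsa),
    weight_unit_mul_self hU hC hA hF hsa hae hacb, hacb_eq] at hassoc
  rw [hacb_eq]
  exact (mul_left_cancel₀ hae hassoc).symm

end LocalUnit

theorem exists_inverse (hU : SingleValued M) (hC : Commutative M) (hA : Associative M)
    (hF : FrobeniusLaw M) {x y a : A} (hxy : M x y a ≠ 0) :
    ∃ s e, M s a e ≠ 0 ∧ M a e a ≠ 0 := by
  obtain ⟨e, hey, -⟩ := hU.exists_frobenius hF hxy hxy
  have hye : M y e y ≠ 0 := hC e y y ▸ hey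
  have hae : M a e a ≠ 0 := by
    refine right_ne_zero_of_mul (a := M x y a) ?_
    rw [hU.assoc_weight hA hxy hye a]
    exact mul_ne_zero hye hxy
  obtain ⟨s, hsa, -⟩ := hU.exists_frobenius hF hae (hC a e a ▸ hae)
  exact ⟨s, e, hsa, hae⟩

theorem exists_star (hU : SingleValued M) (hC : Commutative M) (hA : Associative M)
    (hF : FrobeniusLaw M) {x y a : A} (hxy : M x y a ≠ 0) :
    ∃ s, ∀ b c, M s b c = M a c b := by
  obtain ⟨s, e, hsa, hae⟩ := exists_inverse hU hC hA hF hxy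
  -- the roles of `a` and `s` are symmetric once `s * e = s` is known
  have hse : M s e s ≠ 0 := by
    rw [hC s e s, weight_unit_mul_self hU hC hA hF hsa hae (hC s a e ▸ hsa)]
    exact hae
  refine ⟨s, fun b c => ?_⟩
  by_cases hacb : M a c b = 0
  · by_cases hsbc : M s b c = 0
    · rw [hacb, hsbc]
    · exact (star_weight hU hC hA hF (hC s a e ▸ hsa) hse hsbc).symm
  · exact star_weight hU hC hA hF hsa hae hacb

end L2Frobenius

theorem l2mat_frobenius_satisfies_H_general {A : Type*} (M : A → A → A → ℝ≥0)
    (hM : ∀ a a' : A, HasSum (fun p : A × A => M p.1 p.2 a * M p.1 p.2 a')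
      (if a = a' then 1 else 0))
    (hC : ∀ a b c : A, M a b c = M b a c)
    (hA : ∀ a b c z : A, (∑' w : A, M a b w * M w c z) = ∑' w : A, M b c w * M a w z)
    (hF : ∀ a b c d : A, (∑' e : A, M a b e * M c d e) = ∑' b₁ : A, M b₁ d b * M a b₁ c) :
    ∃ star : A → A, ∀ a b c : A, M (star a) b c = M a c b := by
  have hU := L2Frobenius.IsOrthonormal.singleValued hM
  have hstar (a : A) : ∃ s, ∀ b c, M s b c = M a c b := by
    obtain ⟨x, y, hxy⟩ := L2Frobenius.IsOrthonormal.exists_ne_zero hM a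
    exact L2Frobenius.exists_star hU hC hA hF hxy
  choose star hstar using hstar
  exact ⟨star, hstar⟩

/-- Every Frobenius algebra in the category of nonnegative-real matrices with
ℓ²-summable rows and columns satisfies axiom (H). -/
theorem l2mat_frobenius_satisfies_H {A : Type*} (M : A → A → A → ℝ≥0)
    (hrow : ∀ a : A, Summable (fun p : A × A => (M p.1 p.2 a) ^ 2))
    (hcol : ∀ x y : A, Summable (fun c : A => (M x y c) ^ 2))
    (hM : ∀ a a' : A, HasSum (fun p : A × A => M p.1 p.2 a * M p.1 p.2 a')
      (if a = a' then 1 else 0))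
    (hC : ∀ a b c : A, M a b c = M b a c)
    (hA : ∀ a b c z : A, (∑' w : A, M a b w * M w c z) = ∑' w : A, M b c w * M a w z)
    (hF : ∀ a b c d : A, (∑' e : A, M a b e * M c d e) = ∑' b₁ : A, M b₁ d b * M a b₁ c) :
    ∃ star : A → A, ∀ a b c : A, M (star a) b c = M a c b :=
  l2mat_frobenius_satisfies_H_general M hM hC hA hF
end
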